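/- arXiv:1604.02333 — 9 statements merged into one kernel-verified Lean document; each statement's English description precedes it below -/
import Mathlib

section
/- Let L be a positive integer, let r be an integer with 0 ≤ r ≤ L, and let p ∈ [0,1] be a real number. Then ∑_{j=r+1}^{L} binom(L,j) · (binom(j−1,r) / binom(L,r)) · p^{j−r} (1−p)^{L−j} = ∑_{j=1}^{L−r} (j/(j+r)) · binom(L−r,j) · p^{j} (1−p)^{L−r−j}. -/
/-! Substituting `j = i + r`, the two sums agree term by term, because
`(i + r) C(L, i+r) C(i+r-1, r) = i C(L, r) C(L-r, i)`: the absorption identity turns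
`(i + r) C(i+r-1, r)` into `i C(i+r, r)`, and `C(L, i+r) C(i+r, r) = C(L, r) C(L-r, i)`
counts chains of subsets `R ⊆ J ⊆ [L]` in two ways. -/

namespace Nat

theorem add_succ_mul_choose_mul_choose (L r k : ℕ) :
    (k + r + 1) * (L.choose (k + r + 1) * (k + r).choose r)
      = (k + 1) * (L.choose r * (L - r).choose (k + 1)) := by
  have habsorb : (k + r).choose r * (k + r + 1) = (k + r + 1).choose r * (k + 1) := by
    rw [choose_mul_succ_eq, show k + r + 1 - r = k + 1 by omega]
  have hchain :
      L.choose (k + r + 1) * (k + r + 1).choose r = L.choose r * (L - r).choose (k + 1) := by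
    rw [choose_mul (by omega), show k + r + 1 - r = k + 1 by omega]
  calc (k + r + 1) * (L.choose (k + r + 1) * (k + r).choose r)
      = L.choose (k + r + 1) * ((k + r).choose r * (k + r + 1)) := by ring
    _ = L.choose (k + r + 1) * (k + r + 1).choose r * (k + 1) := by rw [habsorb]; ring
    _ = (k + 1) * (L.choose r * (L - r).choose (k + 1)) := by rw [hchain]; ring

end Nat

theorem choose_mul_choose_pred_div_choose {L r i : ℕ} (hi : 0 < i) (hr : r ≤ L) :
    (L.choose (i + r) : ℝ) * ((i + r - 1).choose r : ℝ) / (L.choose r : ℝ)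
      = (i : ℝ) / ((i : ℝ) + (r : ℝ)) * ((L - r).choose i : ℝ) := by
  obtain ⟨k, rfl⟩ : ∃ k, i = k + 1 := ⟨i - 1, by omega⟩
  have hchoose : (L.choose r : ℝ) ≠ 0 := by exact_mod_cast (Nat.choose_pos hr).ne'
  have key : ((k + r + 1 : ℕ) : ℝ) * (L.choose (k + r + 1) * (k + r).choose r)
      = ((k + 1 : ℕ) : ℝ) * (L.choose r * (L - r).choose (k + 1)) := by
    exact_mod_cast Nat.add_succ_mul_choose_mul_choose L r k
  rw [show k + 1 + r = k + r + 1 by omega, Nat.add_sub_cancel]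
  push_cast at key ⊢
  field_simp
  linear_combination key

theorem stmt_1_general (L r : ℕ)
    (p : ℝ) :
    ∑ j ∈ Finset.Icc (r + 1) L,
        (L.choose j : ℝ) * ((j - 1).choose r : ℝ) / (L.choose r : ℝ) *
          p ^ (j - r) * (1 - p) ^ (L - j)
      = ∑ j ∈ Finset.Icc 1 (L - r),
          (j : ℝ) / ((j : ℝ) + (r : ℝ)) * ((L - r).choose j : ℝ) *
            p ^ j * (1 - p) ^ (L - r - j) := by
  symm
  refine Finset.sum_nbij' (· + r) (· - r) ?_ ?_ ?_ ?_ fun i hi => ?_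
  all_goals try (intro a ha; simp only [Finset.mem_Icc] at ha ⊢; omega)
  rw [Finset.mem_Icc] at hi
  rw [choose_mul_choose_pred_div_choose (by omega) (by omega), Nat.add_sub_cancel,
    Nat.sub_sub, Nat.add_comm r i]

/-- The binomial identity concluding the proof of the centralized caching
inner bound (Theorem 3): for `0 ≤ r ≤ L` and `p ∈ [0,1]`,
`∑_{j=r+1}^{L} C(L,j) (C(j-1,r)/C(L,r)) p^{j-r} (1-p)^{L-j}
  = ∑_{j=1}^{L-r} (j/(j+r)) C(L-r,j) p^j (1-p)^{L-r-j}`. -/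
theorem stmt_1 (L r : ℕ) (hL : 0 < L) (hr : r ≤ L)
    (p : ℝ) (hp0 : 0 ≤ p) (hp1 : p ≤ 1) :
    ∑ j ∈ Finset.Icc (r + 1) L,
        (L.choose j : ℝ) * ((j - 1).choose r : ℝ) / (L.choose r : ℝ) *
          p ^ (j - r) * (1 - p) ^ (L - j)
      = ∑ j ∈ Finset.Icc 1 (L - r),
          (j : ℝ) / ((j : ℝ) + (r : ℝ)) * ((L - r).choose j : ℝ) *
            p ^ j * (1 - p) ^ (L - r - j) :=
  stmt_1_general L r p
end

section
/- Fix integers N ≥ 1 and L ≥ 1. Define h : [0,N] → ℝ by h(0) = N(1−(1−1/N)^L) and h(x) = (N−x)/(1+x(1−1/N)) for x ∈ (0,N], and define its lower convex envelope B : [0,N] → ℝ by B(R) = inf{ θ·h(x₁) + (1−θ)·h(x₂) : θ ∈ [0,1], x₁, x₂ ∈ [0,N], θ·x₁ + (1−θ)·x₂ = R }. Then for every R ∈ [0,N), B(R) ≤ 4 · max_{1 ≤ ℓ ≤ min(L,N)} (1−(1−1/N)^ℓ) · max(N − ℓR, 0). -/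
/-! The envelope `B` lies below both the chord of `h` between `0` and `N`, which is
`(N - R)(1 - (1-1/N)^L)`, and the curve value `h R`. One compares these with a single well
chosen term of the lower bound, using `1 - (1-1/N)^ℓ ≥ ℓ / (N + ℓ)`:
* for `2 m R ≤ N` (with `m = min L N`), the chord against `ℓ = m`, each factor losing at most `2`
  (`(1-1/N)^N ≤ 1/2` covers `L > N`);
* for `1/2 < R ≤ N/4`, the curve against `ℓ = ⌊N/(2R)⌋`, the maximiser of `ℓ (N - ℓR)`, where what
  is left is a polynomial inequality with nonnegative coefficients in `N - 4R` and `2R - 1`;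
* for `R > N/4`, the curve against `ℓ = 1`. -/

lemma one_sub_pow_mul_one_add_mul_le_one {w : ℝ} (hw0 : 0 ≤ w) (hw1 : w ≤ 1) (n : ℕ) :
    (1 - w) ^ n * (1 + n * w) ≤ 1 :=
  calc (1 - w) ^ n * (1 + n * w) ≤ (1 - w) ^ n * (1 + w) ^ n := by
        have : 0 ≤ 1 - w := by linarith
        gcongr
        exact one_add_mul_le_pow (by linarith) n
    _ = (1 - w ^ 2) ^ n := by rw [← mul_pow]; ring
    _ ≤ 1 := pow_le_one₀ (by nlinarith) (by nlinarith)

lemma one_sub_one_div_nonneg {N : ℝ} (hN : 1 ≤ N) : 0 ≤ 1 - 1 / N :=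
  sub_nonneg.2 ((div_le_one (by linarith)).2 hN)

lemma div_add_le_one_sub_one_sub_one_div_pow {N : ℝ} (hN : 1 ≤ N) (n : ℕ) :
    n / (N + n) ≤ 1 - (1 - 1 / N) ^ n := by
  have hpow : (1 - 1 / N) ^ n * (N + n) ≤ N :=
    calc (1 - 1 / N) ^ n * (N + n) = N * ((1 - 1 / N) ^ n * (1 + n * (1 / N))) := by
          field_simp
      _ ≤ N * 1 := by
          gcongr
          have := one_sub_one_div_nonneg hN
          exact one_sub_pow_mul_one_add_mul_le_one (by positivity) (by linarith) n
      _ = N := mul_one N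
  rw [div_le_iff₀ (by positivity)]
  linarith

lemma one_sub_one_sub_one_div_pow_nonneg {N : ℝ} (hN : 1 ≤ N) (n : ℕ) : 0 ≤ 1 - (1 - 1 / N) ^ n :=
  (div_nonneg n.cast_nonneg (by linarith)).trans (div_add_le_one_sub_one_sub_one_div_pow hN n)

lemma half_le_one_sub_one_sub_one_div_pow_self {N : ℕ} (hN : 1 ≤ N) :
    1 / 2 ≤ 1 - (1 - 1 / (N : ℝ)) ^ N := by
  have hN' : (1 : ℝ) ≤ N := by exact_mod_cast hN
  calc (1 : ℝ) / 2 = N / (N + N) := by field_simp; ring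
    _ ≤ _ := div_add_le_one_sub_one_sub_one_div_pow hN' N

lemma sq_sub_four_mul_sq_le_floor {x R : ℝ} (hR : 0 < R) (hx : 0 ≤ x) :
    x ^ 2 - 4 * R ^ 2 ≤ 4 * R * (⌊x / (2 * R)⌋₊ * (x - ⌊x / (2 * R)⌋₊ * R)) := by
  set c : ℝ := ((⌊x / (2 * R)⌋₊ : ℕ) : ℝ)
  have hc : 2 * R * c ≤ x := by
    rw [mul_comm, ← le_div_iff₀ (by positivity)]
    exact Nat.floor_le (by positivity)
  have hc' : x < 2 * R * (c + 1) := by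
    rw [mul_comm, ← div_lt_iff₀ (by positivity)]
    exact Nat.lt_floor_add_one _
  -- the difference of the two sides factors as `(2R(c+1) - x)(x - 2Rc + 2R)`
  nlinarith [mul_nonneg (sub_nonneg.2 hc'.le) (show 0 ≤ x - 2 * R * c + 2 * R by linarith)]

lemma medium_cache_polynomial_le {N R : ℝ} (hR : 1 ≤ 2 * R) (hRN : 4 * R ≤ N) :
    N ^ 2 * (N - R) * (2 * R + 1) ≤ 2 * (N ^ 2 - 4 * R ^ 2) * (N + R * N - R) := by
  obtain ⟨a, ha, rfl⟩ : ∃ a, 0 ≤ a ∧ N = a + 4 * R := ⟨N - 4 * R, by linarith, by ring⟩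
  obtain ⟨b, hb, rfl⟩ : ∃ b, 0 ≤ b ∧ R = (b + 1) / 2 := ⟨2 * R - 1, by linarith, by ring⟩
  rw [← sub_nonneg]
  ring_nf
  positivity

lemma small_cache_bound {N L : ℕ} (hN : 1 ≤ N) {R : ℝ} (hR0 : 0 ≤ R)
    (hR : 2 * (min L N : ℕ) * R ≤ N) :
    (N - R) * (1 - (1 - 1 / (N : ℝ)) ^ L) ≤
      4 * ((1 - (1 - 1 / (N : ℝ)) ^ min L N) * (N - (min L N : ℕ) * R)) := by
  have hN' : (1 : ℝ) ≤ N := by exact_mod_cast hN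
  have hL := one_sub_one_sub_one_div_pow_nonneg hN' L
  have hrate : 1 - (1 - 1 / (N : ℝ)) ^ L ≤ 2 * (1 - (1 - 1 / (N : ℝ)) ^ min L N) := by
    rcases le_total L N with hLN | hNL
    · rw [min_eq_left hLN]
      linarith
    · rw [min_eq_right hNL]
      linarith [half_le_one_sub_one_sub_one_div_pow_self hN,
        pow_nonneg (one_sub_one_div_nonneg hN') L]
  have hload : (N : ℝ) - R ≤ 2 * (N - (min L N : ℕ) * R) := by linarith
  calc (N - R) * (1 - (1 - 1 / (N : ℝ)) ^ L)
      ≤ 2 * (N - (min L N : ℕ) * R) * (2 * (1 - (1 - 1 / (N : ℝ)) ^ min L N)) :=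
        mul_le_mul hload hrate hL (by linarith)
    _ = _ := by ring

lemma medium_cache_bound {N R : ℝ} (hN : 1 ≤ N) (hR : 1 ≤ 2 * R) (hRN : 4 * R ≤ N) :
    (N - R) / (1 + R * (1 - 1 / N)) ≤
      4 * ((1 - (1 - 1 / N) ^ ⌊N / (2 * R)⌋₊) * (N - ⌊N / (2 * R)⌋₊ * R)) := by
  have hR0 : 0 < R := by linarith
  have hN0 : 0 < N := by linarith
  have hfloor := sq_sub_four_mul_sq_le_floor hR0 hN0.le
  have hrate := div_add_le_one_sub_one_sub_one_div_pow hN ⌊N / (2 * R)⌋₊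
  set c : ℝ := ((⌊N / (2 * R)⌋₊ : ℕ) : ℝ)
  have hc0 : 0 ≤ c := Nat.cast_nonneg _
  have hc : 2 * R * c ≤ N := by
    rw [mul_comm, ← le_div_iff₀ (by positivity)]
    exact Nat.floor_le (by positivity)
  have hload : 0 ≤ N - c * R := by nlinarith
  have hcross : R * (N * (N - R) * (N + c)) ≤ R * (4 * (c * (N - c * R)) * (N + R * N - R)) :=
    calc R * (N * (N - R) * (N + c)) = N * (N - R) * (R * N + R * c) := by ring
      _ ≤ N * (N - R) * (R * N + N / 2) := by
          gcongr
          · nlinarith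
          · linarith
      _ = N ^ 2 * (N - R) * (2 * R + 1) / 2 := by ring
      _ ≤ (N ^ 2 - 4 * R ^ 2) * (N + R * N - R) := by linarith [medium_cache_polynomial_le hR hRN]
      _ ≤ 4 * R * (c * (N - c * R)) * (N + R * N - R) := by
          gcongr
          nlinarith
      _ = R * (4 * (c * (N - c * R)) * (N + R * N - R)) := by ring
  calc (N - R) / (1 + R * (1 - 1 / N)) = N * (N - R) / (N + R * N - R) := by
        field_simp
        ring
    _ ≤ 4 * (c * (N - c * R)) / (N + c) := by
        rw [div_le_div_iff₀ (by nlinarith) (by positivity)]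
        exact le_of_mul_le_mul_left hcross hR0
    _ = 4 * (c / (N + c) * (N - c * R)) := by ring
    _ ≤ 4 * ((1 - (1 - 1 / N) ^ ⌊N / (2 * R)⌋₊) * (N - c * R)) := by gcongr

lemma large_cache_bound {N R : ℝ} (hN : 0 < N) (hR : N < 4 * R) (hRN : R ≤ N) :
    (N - R) / (1 + R * (1 - 1 / N)) ≤ 4 * ((1 - (1 - 1 / N) ^ 1) * (N - (1 : ℕ) * R)) := by
  have hD : 1 + R * (1 - 1 / N) = (N + R * (N - 1)) / N := by field_simp
  rw [hD, div_div_eq_mul_div, div_le_iff₀ (by nlinarith), pow_one, sub_sub_cancel, Nat.cast_one,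
    one_mul, show 4 * (1 / N * (N - R)) * (N + R * (N - 1)) = (N - R) * (4 * (N + R * (N - 1)) / N)
      by ring]
  refine mul_le_mul_of_nonneg_left ((le_div_iff₀ hN).2 ?_) (by linarith)
  nlinarith

lemma exists_le_four_mul_one_sub_pow_mul {N L : ℕ} (hN : 1 ≤ N) (hL : 1 ≤ L) {R b : ℝ}
    (hR0 : 0 ≤ R) (hRN : R < N)
    (hchord : b ≤ (N - R) * (1 - (1 - 1 / (N : ℝ)) ^ L))
    (hcurve : 0 < R → b ≤ (N - R) / (1 + R * (1 - 1 / (N : ℝ)))) :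
    ∃ ℓ ∈ Finset.Icc 1 (min L N), b ≤ 4 * ((1 - (1 - 1 / (N : ℝ)) ^ ℓ) * (N - ℓ * R)) := by
  have hm : 1 ≤ min L N := le_min hL hN
  have hmN : ((min L N : ℕ) : ℝ) ≤ N := by exact_mod_cast min_le_right L N
  have hm' : (1 : ℝ) ≤ (min L N : ℕ) := by exact_mod_cast hm
  rcases le_or_gt (2 * (min L N : ℕ) * R) N with hsmall | hlarge
  · exact ⟨min L N, Finset.mem_Icc.2 ⟨hm, le_rfl⟩,
      hchord.trans (small_cache_bound hN hR0 hsmall)⟩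
  have hR : 1 < 2 * R := by nlinarith
  have hcurve := hcurve (by linarith)
  rcases le_or_gt (4 * R) N with hmedium | hbig
  · refine ⟨⌊(N : ℝ) / (2 * R)⌋₊, Finset.mem_Icc.2 ⟨?_, ?_⟩,
      hcurve.trans (medium_cache_bound (by exact_mod_cast hN) hR.le hmedium)⟩
    · rw [Nat.one_le_floor_iff, one_le_div (by linarith)]
      linarith
    · refine Nat.floor_le_of_le ((div_le_iff₀ (by linarith)).2 ?_)
      linarith
  · exact ⟨1, Finset.mem_Icc.2 ⟨le_rfl, hm⟩,
      hcurve.trans (large_cache_bound (by linarith) hbig hRN.le)⟩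

lemma sInf_convexCombination_le {f : ℝ → ℝ} {N R θ x₁ x₂ : ℝ}
    (hf : ∀ x, 0 ≤ x → x ≤ N → 0 ≤ f x) (hθ₀ : 0 ≤ θ) (hθ₁ : θ ≤ 1)
    (hx₁₀ : 0 ≤ x₁) (hx₁ : x₁ ≤ N) (hx₂₀ : 0 ≤ x₂) (hx₂ : x₂ ≤ N)
    (hR : θ * x₁ + (1 - θ) * x₂ = R) :
    sInf {y : ℝ | ∃ θ x₁ x₂ : ℝ,
      0 ≤ θ ∧ θ ≤ 1 ∧ 0 ≤ x₁ ∧ x₁ ≤ N ∧ 0 ≤ x₂ ∧ x₂ ≤ N ∧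
      θ * x₁ + (1 - θ) * x₂ = R ∧ y = θ * f x₁ + (1 - θ) * f x₂} ≤
      θ * f x₁ + (1 - θ) * f x₂ := by
  refine csInf_le ⟨0, ?_⟩ ⟨θ, x₁, x₂, hθ₀, hθ₁, hx₁₀, hx₁, hx₂₀, hx₂, hR, rfl⟩
  rintro y ⟨θ, a, b, hθ₀, hθ₁, ha₀, ha, hb₀, hb, -, rfl⟩
  have : 0 ≤ 1 - θ := by linarith
  have := hf a ha₀ ha
  have := hf b hb₀ hb
  positivity

/-- Theorem 6 (multiplicative gap of 4 for uniform requests): the lower convex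
envelope `B` of the decentralized achievable rate function `h` is at most `4`
times the converse lower bound `max_{1 ≤ ℓ ≤ min(L,N)} (1-(1-1/N)^ℓ)(N-ℓR)⁺`
for every cache rate `R ∈ [0,N)`. -/
theorem stmt_2 (N L : ℕ) (hN : 1 ≤ N) (hL : 1 ≤ L)
    (h : ℝ → ℝ)
    (hh0 : h 0 = (N : ℝ) * (1 - (1 - 1 / (N : ℝ)) ^ L))
    (hhx : ∀ x : ℝ, 0 < x → x ≤ (N : ℝ) →
      h x = ((N : ℝ) - x) / (1 + x * (1 - 1 / (N : ℝ))))
    (B : ℝ → ℝ)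
    (hB : ∀ R : ℝ, B R = sInf {y : ℝ | ∃ θ x₁ x₂ : ℝ,
      0 ≤ θ ∧ θ ≤ 1 ∧ 0 ≤ x₁ ∧ x₁ ≤ (N : ℝ) ∧ 0 ≤ x₂ ∧ x₂ ≤ (N : ℝ) ∧
      θ * x₁ + (1 - θ) * x₂ = R ∧ y = θ * h x₁ + (1 - θ) * h x₂})
    (R : ℝ) (hR0 : 0 ≤ R) (hRN : R < (N : ℝ)) :
    B R ≤ 4 * (Finset.Icc 1 (min L N)).sup'
        (Finset.nonempty_Icc.2 (le_min hL hN))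
        (fun ℓ : ℕ => (1 - (1 - 1 / (N : ℝ)) ^ ℓ) * max ((N : ℝ) - ℓ * R) 0) := by
  have hN' : (1 : ℝ) ≤ N := by exact_mod_cast hN
  have hh : ∀ x : ℝ, 0 ≤ x → x ≤ N → 0 ≤ h x := by
    intro x hx hxN
    rcases hx.eq_or_lt with rfl | hx
    · rw [hh0]; exact mul_nonneg (by positivity) (one_sub_one_sub_one_div_pow_nonneg hN' L)
    · rw [hhx x hx hxN]
      exact div_nonneg (by linarith) (by nlinarith [one_sub_one_div_nonneg hN'])
  have hchord : B R ≤ (N - R) * (1 - (1 - 1 / (N : ℝ)) ^ L) := by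
    have := sInf_convexCombination_le hh (θ := 1 - R / N) (x₁ := 0) (x₂ := N) (R := R)
      (by rw [sub_nonneg, div_le_one (by positivity)]; linarith) (sub_le_self _ (by positivity))
      le_rfl (by positivity) (by positivity) le_rfl (by field_simp; ring)
    rw [← hB, hh0, hhx N (by positivity) le_rfl] at this
    convert this using 1
    field_simp
    ring
  have hcurve (hR : 0 < R) : B R ≤ (N - R) / (1 + R * (1 - 1 / (N : ℝ))) := by
    have := sInf_convexCombination_le hh (θ := 1) (x₁ := R) (x₂ := 0) (R := R)
      zero_le_one le_rfl hR0 hRN.le le_rfl (by positivity) (by ring)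
    rw [← hB, hhx R hR hRN.le] at this
    simpa using this
  obtain ⟨ℓ, hℓ, hBℓ⟩ := exists_le_four_mul_one_sub_pow_mul hN hL hR0 hRN hchord hcurve
  refine hBℓ.trans (mul_le_mul_of_nonneg_left (le_trans ?_ (Finset.le_sup' _ hℓ)) (by norm_num))
  exact mul_le_mul_of_nonneg_left (le_max_left _ _) (one_sub_one_sub_one_div_pow_nonneg hN' ℓ)
end

section
/- Let N ≥ 2 be an integer, let ℓ be an integer with 1 ≤ ℓ ≤ N−1, and set β = 1 − 1/N. Then (1 − β^ℓ + (ℓ/N)β^ℓ) · (1 − β^{ℓ+1} + (ℓ/N)β^ℓ) ≤ 4 · (1 − β^ℓ) · (1 − β^{ℓ+1}). -/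
/-- The corner-point inequality from Appendix A (proof of Theorem 6):
with `β = 1 - 1/N`, for `N ≥ 2` and `1 ≤ ℓ ≤ N-1`,
`(1 - β^ℓ + (ℓ/N)β^ℓ)(1 - β^{ℓ+1} + (ℓ/N)β^ℓ) ≤ 4 (1 - β^ℓ)(1 - β^{ℓ+1})`. -/
theorem stmt_3 (N ℓ : ℕ) (hN : 2 ≤ N) (hl1 : 1 ≤ ℓ) (hl2 : ℓ ≤ N - 1)
    (β : ℝ) (hβ : β = 1 - 1 / (N : ℝ)) :
    (1 - β ^ ℓ + ((ℓ : ℝ) / (N : ℝ)) * β ^ ℓ) *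
        (1 - β ^ (ℓ + 1) + ((ℓ : ℝ) / (N : ℝ)) * β ^ ℓ)
      ≤ 4 * (1 - β ^ ℓ) * (1 - β ^ (ℓ + 1)) := by
  have hN0 : (0:ℝ) < N := by positivity
  have hN2 : (2:ℝ) ≤ N := by exact_mod_cast hN
  have hβ0 : 0 ≤ β := by
    rw [hβ]
    have : 1 / (N:ℝ) ≤ 1 / 2 := by
      apply one_div_le_one_div_of_le <;> linarith
    linarith
  have hβ1 : β ≤ 1 := by
    rw [hβ]
    have : 0 < 1 / (N:ℝ) := by positivity
    linarith
  have hinv : 1 - β = 1 / (N:ℝ) := by rw [hβ]; ring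
  -- geometric sum identity
  have hgeom : 1 - β ^ ℓ = (1 - β) * ∑ i ∈ Finset.range ℓ, β ^ i := by
    have := geom_sum_mul β ℓ
    nlinarith [this]
  have hsum : (ℓ:ℝ) * β ^ (ℓ - 1) ≤ ∑ i ∈ Finset.range ℓ, β ^ i := by
    have : ∑ i ∈ Finset.range ℓ, β ^ (ℓ - 1) ≤ ∑ i ∈ Finset.range ℓ, β ^ i := by
      apply Finset.sum_le_sum
      intro i hi
      exact pow_le_pow_of_le_one hβ0 hβ1 (Nat.le_sub_one_of_lt (Finset.mem_range.mp hi))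
    simpa using this
  have hkey : ((ℓ : ℝ) / (N : ℝ)) * β ^ ℓ ≤ 1 - β ^ ℓ := by
    have h1 : β ^ ℓ ≤ β ^ (ℓ - 1) :=
      pow_le_pow_of_le_one hβ0 hβ1 (Nat.sub_le ℓ 1)
    have h2 : (ℓ:ℝ) * β ^ ℓ ≤ (ℓ:ℝ) * β ^ (ℓ - 1) := by
      apply mul_le_mul_of_nonneg_left h1 (by positivity)
    have h3 : (1 - β) * ((ℓ:ℝ) * β ^ (ℓ - 1)) ≤ (1 - β) * ∑ i ∈ Finset.range ℓ, β ^ i := by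
      apply mul_le_mul_of_nonneg_left hsum (by linarith)
    calc ((ℓ : ℝ) / (N : ℝ)) * β ^ ℓ = (1 - β) * ((ℓ:ℝ) * β ^ ℓ) := by
            rw [hinv]; ring
      _ ≤ (1 - β) * ((ℓ:ℝ) * β ^ (ℓ - 1)) :=
            mul_le_mul_of_nonneg_left h2 (by linarith)
      _ ≤ (1 - β) * ∑ i ∈ Finset.range ℓ, β ^ i := h3
      _ = 1 - β ^ ℓ := hgeom.symm
  have hmono : β ^ (ℓ + 1) ≤ β ^ ℓ :=
    pow_le_pow_of_le_one hβ0 hβ1 (Nat.le_succ ℓ)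
  have hkey2 : ((ℓ : ℝ) / (N : ℝ)) * β ^ ℓ ≤ 1 - β ^ (ℓ + 1) := by linarith
  have hpos : (0:ℝ) ≤ ((ℓ : ℝ) / (N : ℝ)) * β ^ ℓ := by positivity
  nlinarith [mul_le_mul (by linarith : 1 - β ^ ℓ + ((ℓ : ℝ) / (N : ℝ)) * β ^ ℓ ≤ 2 * (1 - β ^ ℓ))
      (by linarith : 1 - β ^ (ℓ + 1) + ((ℓ : ℝ) / (N : ℝ)) * β ^ ℓ ≤ 2 * (1 - β ^ (ℓ + 1)))
      (by linarith) (by linarith)]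
end

section
/- The function φ(z) = e^{z} · (1 + z/(e^{z} − 1))² is nondecreasing on (0,∞); that is, for all real 0 < z₁ ≤ z₂, e^{z₁}(1 + z₁/(e^{z₁} − 1))² ≤ e^{z₂}(1 + z₂/(e^{z₂} − 1))². -/
/-! Writing `φ = ψ²` with `ψ(z) = e^{z/2} (1 + z/(e^z - 1)) ≥ 0` (`sqrtPhi`), it suffices that `ψ` is
monotone on `(0, ∞)`. Its derivative is
`ψ'(z) = e^{z/2} (e^z + 1) (e^z - 1 - z) / (2 (e^z - 1)²)`, which is nonnegative because
`e^z ≥ 1 + z`. -/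

open Real Set

noncomputable def sqrtPhi (z : ℝ) : ℝ := exp (z / 2) * (1 + z / (exp z - 1))

theorem sq_sqrtPhi (z : ℝ) : sqrtPhi z ^ 2 = exp z * (1 + z / (exp z - 1)) ^ 2 := by
  rw [sqrtPhi, mul_pow, ← exp_nat_mul]
  ring_nf

theorem div_exp_sub_one_nonneg (z : ℝ) : 0 ≤ z / (exp z - 1) := by
  rcases le_total 0 z with hz | hz
  · exact div_nonneg hz (sub_nonneg.mpr (one_le_exp hz))
  · exact div_nonneg_of_nonpos hz (sub_nonpos.mpr (exp_le_one_iff.mpr hz))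

theorem sqrtPhi_nonneg (z : ℝ) : 0 ≤ sqrtPhi z :=
  mul_nonneg (exp_pos _).le (by linarith [div_exp_sub_one_nonneg z])

theorem hasDerivAt_sqrtPhi {x : ℝ} (hx : x ≠ 0) :
    HasDerivAt sqrtPhi
      (exp (x / 2) * ((exp x + 1) * (exp x - 1 - x)) / (2 * (exp x - 1) ^ 2)) x := by
  have hne : exp x - 1 ≠ 0 := sub_ne_zero.mpr (mt (exp_eq_one_iff x).mp hx)
  have hexp : HasDerivAt (fun z => exp (z / 2)) (exp (x / 2) * (1 / 2)) x :=
    ((hasDerivAt_id x).div_const 2).exp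
  have hfrac : HasDerivAt (fun z => 1 + z / (exp z - 1))
      ((1 * (exp x - 1) - x * exp x) / (exp x - 1) ^ 2) x :=
    ((hasDerivAt_id x).div ((hasDerivAt_exp x).sub_const 1) hne).const_add 1
  have hprod : HasDerivAt sqrtPhi _ x := hexp.mul hfrac
  convert hprod using 1
  field_simp
  ring

theorem sqrtPhi_deriv_nonneg (x : ℝ) :
    0 ≤ exp (x / 2) * ((exp x + 1) * (exp x - 1 - x)) / (2 * (exp x - 1) ^ 2) := by
  have hcross : 0 ≤ exp x - 1 - x := by linarith [add_one_le_exp x]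
  have := exp_pos x
  positivity

theorem monotoneOn_sqrtPhi : MonotoneOn sqrtPhi (Ioi 0) := by
  refine monotoneOn_of_hasDerivWithinAt_nonneg (convex_Ioi 0)
    (fun x hx => (hasDerivAt_sqrtPhi (ne_of_gt hx)).continuousAt.continuousWithinAt)
    (fun x hx => ?_) (fun x _ => sqrtPhi_deriv_nonneg x)
  rw [interior_Ioi] at hx
  exact (hasDerivAt_sqrtPhi (ne_of_gt hx)).hasDerivWithinAt

/-- Monotonicity of `φ(z) = e^z (1 + z/(e^z - 1))²` on `(0,∞)`, used in the
corner-point analysis of the proof of Theorem 9. -/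
theorem stmt_7 (z₁ z₂ : ℝ) (h0 : 0 < z₁) (h12 : z₁ ≤ z₂) :
    Real.exp z₁ * (1 + z₁ / (Real.exp z₁ - 1)) ^ 2 ≤
      Real.exp z₂ * (1 + z₂ / (Real.exp z₂ - 1)) ^ 2 := by
  rw [← sq_sqrtPhi, ← sq_sqrtPhi]
  exact pow_le_pow_left₀ (sqrtPhi_nonneg z₁)
    (monotoneOn_sqrtPhi h0 (h0.trans_le h12) h12) 2
end

section
/- Let N ≥ 5 be an integer, let ℓ be an integer with 1 ≤ ℓ and 4ℓ ≤ N, and set β = 1 − 1/N. Then β^{−ℓ} · (1 + (ℓ/N)·β^ℓ/(1 − β^ℓ))² < 4.7. In particular, this quantity is at most (5/4)^{5/4}·(1 + (5/4)·ln(5/4)/((5/4)^{5/4} − 1))² ≈ 4.607. -/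
/-!
Write `d = 1/(N-1)`, so that `β⁻¹ = 1 + d`, and put `A = (1+d)^ℓ = β^{-ℓ}` and `u = ℓd`.
The quantity becomes `A (1 + u/((1+d)(A-1)))²`. Bounding `A` above by `exp u` and `A - 1`
below by the second-order Bernoulli inequality leaves a one-variable polynomial inequality in
`u ≤ 5/16` (after a case split at `u = 1/4`, where the constraint `4ℓ ≤ N` starts to force
`d ≥ 4u - 1`), which shows that the quantity is at most `4.6`. A numerical evaluation shows
that `4.6` is below the stated bound `≈ 4.607`.
-/

open Real

lemma exp_le_quartic {x : ℝ} (h0 : 0 ≤ x) (h1 : x ≤ 1) :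
    exp x ≤ 1 + x + x ^ 2 / 2 + x ^ 3 / 6 + x ^ 4 * (5 / 96) := by
  have h := exp_bound' h0 h1 (n := 4) (by norm_num)
  simp only [Finset.sum_range_succ, Finset.sum_range_zero, Nat.factorial] at h
  norm_num at h
  linarith

lemma quartic_le_exp {x : ℝ} (h0 : 0 ≤ x) :
    1 + x + x ^ 2 / 2 + x ^ 3 / 6 + x ^ 4 / 24 ≤ exp x := by
  have h := sum_le_exp_of_nonneg h0 5
  simp only [Finset.sum_range_succ, Finset.sum_range_zero, Nat.factorial] at h
  norm_num at h
  linarith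

lemma one_add_mul_add_sq_le_pow {x : ℝ} (hx : 0 ≤ x) (m : ℕ) :
    1 + m * x + m * (m - 1) * x ^ 2 / 2 ≤ (1 + x) ^ m := by
  induction m with
  | zero => norm_num
  | succ k ih =>
    have hk : 0 ≤ (k : ℝ) * (k - 1) := by
      rcases Nat.eq_zero_or_pos k with rfl | hk
      · simp
      · have : (1 : ℝ) ≤ k := by exact_mod_cast hk
        nlinarith
    calc 1 + ((k + 1 : ℕ) : ℝ) * x + (k + 1 : ℕ) * ((k + 1 : ℕ) - 1) * x ^ 2 / 2
        ≤ (1 + k * x + k * (k - 1) * x ^ 2 / 2) * (1 + x) := by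
          push_cast
          nlinarith [mul_nonneg hk (pow_nonneg hx 3)]
      _ ≤ (1 + x) ^ k * (1 + x) := by gcongr
      _ = (1 + x) ^ (k + 1) := by ring

lemma exp_mul_one_add_two_div_sq_le_of_poly {u D₀ D : ℝ} (hu0 : 0 ≤ u) (hu1 : u ≤ 1)
    (hD₀ : 0 < D₀) (hD : D₀ ≤ D)
    (hpoly : (1 + u + u ^ 2 / 2 + u ^ 3 / 6 + u ^ 4 * (5 / 96)) * (D₀ + 2) ^ 2 ≤ 4.6 * D₀ ^ 2) :
    exp u * (1 + 2 / D) ^ 2 ≤ 4.6 := by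
  have hD0 : 0 < D := hD₀.trans_le hD
  calc exp u * (1 + 2 / D) ^ 2
      ≤ (1 + u + u ^ 2 / 2 + u ^ 3 / 6 + u ^ 4 * (5 / 96)) * (1 + 2 / D₀) ^ 2 := by
        gcongr
        exact exp_le_quartic hu0 hu1
    _ = (1 + u + u ^ 2 / 2 + u ^ 3 / 6 + u ^ 4 * (5 / 96)) * (D₀ + 2) ^ 2 / D₀ ^ 2 := by
        field_simp
    _ ≤ 4.6 := by rwa [div_le_iff₀ (by positivity)]

lemma exp_mul_one_add_two_div_sq_le_four_point_six {d u : ℝ} (hd : 0 < d) (hd4 : d ≤ 1 / 4)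
    (hdu : d ≤ u) (hu : 4 * u ≤ 1 + d) :
    exp u * (1 + 2 / ((1 + d) * (2 + u - d))) ^ 2 ≤ 4.6 := by
  have hu0 : 0 ≤ u := by linarith
  -- `(1 + d) * (2 + u - d)` is concave in `d`; bound it by its value at `d = 0` or `d = 4u - 1`
  rcases le_or_gt u (1 / 4) with hu4 | hu4
  · refine exp_mul_one_add_two_div_sq_le_of_poly hu0 (by linarith) (D₀ := 2 + u) (by linarith)
      (by nlinarith) ?_
    nlinarith [pow_nonneg hu0 3, pow_nonneg hu0 4,
      mul_nonneg (mul_nonneg hu0 hu0) (sub_nonneg.2 hu4)]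
  · have ha : 0 ≤ u - 1 / 4 := by linarith
    have hb : 0 ≤ 5 / 16 - u := by linarith
    have hd₁ : 0 ≤ d - (4 * u - 1) := by linarith
    have hd₂ : 0 ≤ 2 - 3 * u - d := by linarith
    refine exp_mul_one_add_two_div_sq_le_of_poly hu0 (by linarith) (D₀ := 12 * u * (1 - u))
      (by nlinarith) (by nlinarith [mul_nonneg hd₁ hd₂]) ?_
    nlinarith [mul_nonneg ha hb, mul_nonneg (pow_nonneg ha 2) hb,
      mul_nonneg (pow_nonneg ha 3) hb, pow_nonneg ha 2, pow_nonneg ha 3]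

lemma mul_one_add_div_sq_le {d u A : ℝ} (hd : 0 < d) (hdu : d ≤ u)
    (hA_lb : 1 + u + u * (u - d) / 2 ≤ A) (hA_ub : A ≤ exp u) :
    A * (1 + u / ((1 + d) * (A - 1))) ^ 2 ≤ exp u * (1 + 2 / ((1 + d) * (2 + u - d))) ^ 2 := by
  have hu : 0 < u := hd.trans_le hdu
  have hA1 : u * (2 + u - d) / 2 ≤ A - 1 := by linarith
  have hfrac : u / ((1 + d) * (A - 1)) ≤ 2 / ((1 + d) * (2 + u - d)) :=
    calc u / ((1 + d) * (A - 1)) ≤ u / ((1 + d) * (u * (2 + u - d) / 2)) := by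
          gcongr
          have : 0 < 2 + u - d := by linarith
          positivity
      _ = 2 / ((1 + d) * (2 + u - d)) := by field_simp
  have hA1pos : 0 < A - 1 := lt_of_lt_of_le (by nlinarith) hA1
  gcongr

lemma corner_ratio_le_four_point_six {N ℓ : ℕ} (hN : 5 ≤ N) (hl : 1 ≤ ℓ) (hlN : 4 * ℓ ≤ N) :
    ((1 - 1 / (N : ℝ)) ^ ℓ)⁻¹ *
      (1 + ((ℓ : ℝ) / N) * (1 - 1 / (N : ℝ)) ^ ℓ / (1 - (1 - 1 / (N : ℝ)) ^ ℓ)) ^ 2 ≤ 4.6 := by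
  have hN' : (5 : ℝ) ≤ N := by exact_mod_cast hN
  have hl' : (1 : ℝ) ≤ ℓ := by exact_mod_cast hl
  have hlN' : 4 * (ℓ : ℝ) ≤ N := by exact_mod_cast hlN
  set d : ℝ := 1 / (N - 1) with hd_def
  have hN0 : (N : ℝ) ≠ 0 := by positivity
  have hN1 : (N : ℝ) - 1 ≠ 0 := by linarith
  have hd : 0 < d := by rw [hd_def]; apply div_pos <;> linarith
  have h1d : 1 + d = N / (N - 1) := by rw [hd_def]; field_simp; ring
  have hβ : 1 - 1 / (N : ℝ) = (1 + d)⁻¹ := by rw [h1d, inv_div]; field_simp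
  have hlN_eq : (ℓ : ℝ) / N = ℓ * d / (1 + d) := by rw [h1d, hd_def]; field_simp
  have hA1 : 1 < (1 + d) ^ ℓ := one_lt_pow₀ (by linarith) (by omega)
  have hfrac : ℓ * d / (1 + d) * ((1 + d) ^ ℓ)⁻¹ / (1 - ((1 + d) ^ ℓ)⁻¹) =
      ℓ * d / ((1 + d) * ((1 + d) ^ ℓ - 1)) := by
    have : (1 + d) ^ ℓ - 1 ≠ 0 := by linarith
    field_simp
  rw [hβ, hlN_eq, inv_pow, inv_inv, hfrac]
  have hA_lb := one_add_mul_add_sq_le_pow hd.le ℓ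
  refine (mul_one_add_div_sq_le hd (by nlinarith) ?_ ?_).trans
    (exp_mul_one_add_two_div_sq_le_four_point_six hd ?_ (by nlinarith) ?_)
  · linarith
  · calc (1 + d) ^ ℓ ≤ exp d ^ ℓ := by gcongr; linarith [add_one_le_exp d]
      _ = exp (ℓ * d) := by rw [← exp_nat_mul]
  · rw [hd_def, div_le_div_iff₀] <;> linarith
  · calc 4 * (ℓ * d) ≤ N * d := by nlinarith
      _ = 1 + d := by rw [h1d, hd_def]; ring

lemma log_five_div_four_mem : log (5 / 4) ∈ Set.Icc (0.2231 : ℝ) 0.2232 := by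
  constructor
  · rw [le_log_iff_exp_le (by norm_num)]
    nlinarith [exp_le_quartic (x := 0.2231) (by norm_num) (by norm_num)]
  · rw [log_le_iff_le_exp (by norm_num)]
    nlinarith [quartic_le_exp (x := 0.2232) (by norm_num)]

lemma four_point_six_le_exp_mul_one_add_div_sq {z : ℝ} (hz₁ : 0.278875 ≤ z) (hz₂ : z ≤ 0.279) :
    4.6 ≤ exp z * (1 + z / (exp z - 1)) ^ 2 := by
  have hexp_lb : 1.3216 ≤ exp z :=
    calc (1.3216 : ℝ) ≤ 1 + 0.278875 + 0.278875 ^ 2 / 2 + 0.278875 ^ 3 / 6 + 0.278875 ^ 4 / 24 := by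
          norm_num
      _ ≤ exp 0.278875 := quartic_le_exp (by norm_num)
      _ ≤ exp z := exp_le_exp.2 hz₁
  have hexp_ub : exp z ≤ 1.3219 :=
    calc exp z ≤ exp 0.279 := exp_le_exp.2 hz₂
      _ ≤ 1 + 0.279 + 0.279 ^ 2 / 2 + 0.279 ^ 3 / 6 + 0.279 ^ 4 * (5 / 96) :=
          exp_le_quartic (by norm_num) (by norm_num)
      _ ≤ 1.3219 := by norm_num
  calc (4.6 : ℝ) ≤ 1.3216 * (1 + 0.278875 / 0.3219) ^ 2 := by norm_num
    _ ≤ exp z * (1 + z / (exp z - 1)) ^ 2 := by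
      have : 0 < exp z - 1 := by linarith
      gcongr
      linarith

/-- The corner-point inequality of Appendix A.2 (proof of the 4.7 gap,
Theorem 9): for an integer `N ≥ 5`, an integer `ℓ` with `1 ≤ ℓ` and `4ℓ ≤ N`,
and `β = 1 - 1/N`, one has
`β^{-ℓ} (1 + (ℓ/N) β^ℓ/(1-β^ℓ))² < 4.7`, and in particular this quantity is
at most `(5/4)^{5/4} (1 + (5/4)·ln(5/4)/((5/4)^{5/4} - 1))² ≈ 4.607`. -/
theorem stmt_10 (N ℓ : ℕ) (hN : 5 ≤ N) (hl : 1 ≤ ℓ) (hlN : 4 * ℓ ≤ N)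
    (β : ℝ) (hβ : β = 1 - 1 / (N : ℝ)) :
    (β ^ ℓ)⁻¹ * (1 + ((ℓ : ℝ) / (N : ℝ)) * β ^ ℓ / (1 - β ^ ℓ)) ^ 2 < 4.7 ∧
      (β ^ ℓ)⁻¹ * (1 + ((ℓ : ℝ) / (N : ℝ)) * β ^ ℓ / (1 - β ^ ℓ)) ^ 2 ≤
        ((5 / 4 : ℝ) ^ (5 / 4 : ℝ)) *
          (1 + (5 / 4) * Real.log (5 / 4) / ((5 / 4 : ℝ) ^ (5 / 4 : ℝ) - 1)) ^ 2 := by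
  subst hβ
  have h := corner_ratio_le_four_point_six hN hl hlN
  refine ⟨h.trans_lt (by norm_num), h.trans ?_⟩
  obtain ⟨hlog₁, hlog₂⟩ := log_five_div_four_mem
  rw [rpow_def_of_pos (by norm_num), mul_comm (log _)]
  exact four_point_six_le_exp_mul_one_add_div_sq (by linarith) (by linarith)
end

section
/- For all integers N ≥ 5 and L ≥ 1, min(L,N) ≤ (1/(1 − e^{−1/4})) · N · (1 − (1 − 1/N)^{min(L, ⌈N/4⌉)}). -/
/-- Chord inequality: for `t ∈ [0,1]`, `exp (-t) ≤ 1 - (1 - exp (-1)) * t`. -/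
lemma exp_chord (t : ℝ) (h0 : 0 ≤ t) (h1 : t ≤ 1) :
    Real.exp (-t) ≤ 1 - (1 - Real.exp (-1)) * t := by
  have h := convexOn_exp.2 (Set.mem_univ (0:ℝ)) (Set.mem_univ (-1:ℝ))
    (by linarith : (0:ℝ) ≤ 1 - t) h0 (by ring)
  simp only [smul_eq_mul, Real.exp_zero] at h
  have : (1 - t) * 0 + t * (-1) = -t := by ring
  rw [this] at h
  linarith

/-- Zero-cache endpoint inequality in the proof of Theorem 9 (Appendix A.2):
for integers `N ≥ 5` and `L ≥ 1`,
`min(L,N) ≤ (1/(1 - e^{-1/4})) · N · (1 - (1 - 1/N)^{min(L,⌈N/4⌉)})`.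
(Note `⌈N/4⌉ = (N+3)/4` in ℕ.) -/
theorem stmt_11 (N L : ℕ) (hN : 5 ≤ N) (hL : 1 ≤ L) :
    (min L N : ℝ) ≤
      (1 / (1 - Real.exp (-(1 / 4)))) * (N : ℝ) *
        (1 - (1 - 1 / (N : ℝ)) ^ min L ((N + 3) / 4)) := by
  have hNR : (5:ℝ) ≤ (N:ℝ) := by exact_mod_cast hN
  have hNpos : (0:ℝ) < N := by linarith
  have hc : 0 < 1 - Real.exp (-(1/4)) := by
    have : Real.exp (-(1/4)) < 1 := Real.exp_lt_one_iff.2 (by norm_num)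
    linarith
  set m := min L ((N + 3) / 4) with hm
  -- base ≥ 0
  have hb0 : (0:ℝ) ≤ 1 - 1/(N:ℝ) := by
    rw [sub_nonneg, div_le_one hNpos]; linarith
  -- (1 - 1/N)^m ≤ exp(-(m/N))
  have hpow : (1 - 1/(N:ℝ)) ^ m ≤ Real.exp (-((m:ℝ)/N)) := by
    have h1 : 1 - 1/(N:ℝ) ≤ Real.exp (-(1/N)) := by
      have := Real.add_one_le_exp (-(1/(N:ℝ)))
      linarith
    calc (1 - 1/(N:ℝ)) ^ m ≤ (Real.exp (-(1/N))) ^ m := pow_le_pow_left₀ hb0 h1 m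
      _ = Real.exp (-((m:ℝ)/N)) := by
          rw [← Real.exp_nat_mul]; ring_nf
  rcases le_or_gt ((N + 3) / 4) L with hcase | hcase
  · -- m = ⌈N/4⌉, so m/N ≥ 1/4
    have hmval : m = (N + 3) / 4 := by simp [hm, min_eq_right hcase]
    have h4m : N ≤ 4 * m := by omega
    have h4mR : (1:ℝ)/4 ≤ (m:ℝ)/N := by
      rw [div_le_div_iff₀ (by norm_num) hNpos]
      have : (N:ℝ) ≤ 4 * m := by exact_mod_cast h4m
      linarith
    have hexp : Real.exp (-((m:ℝ)/N)) ≤ Real.exp (-(1/4)) :=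
      Real.exp_le_exp.2 (by linarith)
    have hpow2 : (1 - 1/(N:ℝ)) ^ m ≤ Real.exp (-(1/4)) := hpow.trans hexp
    have hminN : (min (L:ℝ) N) ≤ (N:ℝ) := min_le_right _ _
    rw [div_mul_eq_mul_div, div_mul_eq_mul_div, le_div_iff₀ hc]
    nlinarith [hminN, hpow2, hc, hNpos]
  · -- m = L ≤ ⌈N/4⌉ ≤ N
    have hmval : m = L := by simp [hm, min_eq_left (le_of_lt hcase)]
    have hLN : L ≤ N := by omega
    have hminL : min L N = L := min_eq_left hLN
    rw [min_eq_left (show (L:ℝ) ≤ N by exact_mod_cast hLN)]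
    set t : ℝ := (L:ℝ)/N with ht
    have ht0 : 0 ≤ t := by positivity
    have ht1 : t ≤ 1 := by
      rw [ht, div_le_one hNpos]; exact_mod_cast hLN
    have hchord : Real.exp (-t) ≤ 1 - (1 - Real.exp (-1)) * t := exp_chord t ht0 ht1
    have he14 : Real.exp (-1) ≤ Real.exp (-(1/4)) := Real.exp_le_exp.2 (by norm_num)
    have hkey : (1 - Real.exp (-(1/4))) * t ≤ 1 - (1 - 1/(N:ℝ)) ^ m := by
      have h1 : (1 - 1/(N:ℝ)) ^ m ≤ Real.exp (-t) := by
        rw [ht, ← hmval]; exact hpow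
      nlinarith
    have htN : t * N = L := by rw [ht]; field_simp
    rw [div_mul_eq_mul_div, div_mul_eq_mul_div, le_div_iff₀ hc]
    have h2 := mul_le_mul_of_nonneg_left hkey hNpos.le
    nlinarith [h2, htN]
end

section
/- Let L ≥ 2 be an integer and p ∈ [0,1] a real number. For an integer r with 0 ≤ r ≤ L define κ(r) = ∑_{j=1}^{L−r} (j/(j+r)) · binom(L−r, j) · p^{j} (1−p)^{L−r−j} (so κ(L) = 0). Then κ is discretely convex: for every integer r with 1 ≤ r ≤ L−1, κ(r−1) + κ(r+1) ≥ 2·κ(r). -/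
/-!
For `r ≥ 1`, `κ r = E[Z / (Z + r)]` with `Z ~ Binomial(L - r, p)`. Couple the three binomials
`Binomial(L - r - 1, p)`, `Binomial(L - r, p)`, `Binomial(L - r + 1, p)` by adding independent
Bernoulli trials to a common `Z ~ Binomial(m, p)`, `m = L - r - 1`. Then `κ(r-1) + κ(r+1) - 2κ(r)`
becomes the expectation of a function of `Z` alone, and this function is pointwise nonnegative:
at `Z = x` it equals `2(1-p)(x + (r-1)p) / ((x+r-1)(x+r)(x+r+1))`.
-/

open Finset

noncomputable section

def binomialExpectation (n : ℕ) (p : ℝ) (g : ℕ → ℝ) : ℝ :=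
  ∑ j ∈ range (n + 1), g j * (n.choose j : ℝ) * p ^ j * (1 - p) ^ (n - j)

/-- `shiftMix p g z = E[g (z + B)]` for a Bernoulli(`p`) variable `B`. -/
def shiftMix (p : ℝ) (g : ℕ → ℝ) (z : ℕ) : ℝ :=
  p * g (z + 1) + (1 - p) * g z

def offsetRatio (s : ℝ) (j : ℕ) : ℝ :=
  (j : ℝ) / ((j : ℝ) + s)

end

theorem sum_Icc_one_eq_binomialExpectation (n : ℕ) (p : ℝ) (g : ℕ → ℝ) (hg : g 0 = 0) :
    ∑ j ∈ Icc 1 n, g j * (n.choose j : ℝ) * p ^ j * (1 - p) ^ (n - j) =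
      binomialExpectation n p g := by
  rw [binomialExpectation, sum_range_eq_add_Ico _ n.add_one_pos, Ico_add_one_right_eq_Icc, hg]
  ring

theorem binomialExpectation_add (n : ℕ) (p : ℝ) (g h : ℕ → ℝ) :
    binomialExpectation n p (fun z => g z + h z) =
      binomialExpectation n p g + binomialExpectation n p h := by
  simp only [binomialExpectation, add_mul, sum_add_distrib]

theorem binomialExpectation_const_mul (n : ℕ) (p c : ℝ) (g : ℕ → ℝ) :
    binomialExpectation n p (fun z => c * g z) = c * binomialExpectation n p g := by
  simp only [binomialExpectation, mul_sum, mul_assoc]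

theorem binomialExpectation_mono {n : ℕ} {p : ℝ} (hp0 : 0 ≤ p) (hp1 : p ≤ 1) {g h : ℕ → ℝ}
    (hgh : ∀ z, g z ≤ h z) : binomialExpectation n p g ≤ binomialExpectation n p h := by
  have hq : 0 ≤ 1 - p := sub_nonneg.2 hp1
  unfold binomialExpectation
  gcongr with j
  exact hgh j

theorem binomialExpectation_succ (n : ℕ) (p : ℝ) (g : ℕ → ℝ) :
    binomialExpectation (n + 1) p g = binomialExpectation n p (shiftMix p g) := by
  have hpascal : ∀ z ∈ range (n + 1),
      g (z + 1) * ((n + 1).choose (z + 1) : ℝ) * p ^ (z + 1) * (1 - p) ^ (n + 1 - (z + 1)) =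
        p * (g (z + 1) * (n.choose z : ℝ) * p ^ z * (1 - p) ^ (n - z)) +
          g (z + 1) * (n.choose (z + 1) : ℝ) * p ^ (z + 1) * (1 - p) ^ (n + 1 - (z + 1)) := by
    intro z _
    rw [Nat.choose_succ_succ, Nat.succ_sub_succ]
    push_cast
    ring
  have hfailure : ∑ j ∈ range (n + 2), g j * (n.choose j : ℝ) * p ^ j * (1 - p) ^ (n + 1 - j) =
      (1 - p) * binomialExpectation n p g := by
    rw [sum_range_succ, Nat.choose_succ_self, Nat.cast_zero, mul_zero, zero_mul, zero_mul,
      add_zero, binomialExpectation, mul_sum]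
    refine sum_congr rfl fun j hj => ?_
    rw [Nat.sub_add_comm (mem_range_succ_iff.1 hj), pow_succ]
    ring
  calc binomialExpectation (n + 1) p g
      = ∑ z ∈ range (n + 1), g (z + 1) * ((n + 1).choose (z + 1) : ℝ) * p ^ (z + 1) *
            (1 - p) ^ (n + 1 - (z + 1)) + g 0 * (1 - p) ^ (n + 1) := by
        rw [binomialExpectation, sum_range_succ']
        simp only [Nat.choose_zero_right, Nat.cast_one, mul_one, pow_zero, Nat.sub_zero]
    _ = p * binomialExpectation n p (fun z => g (z + 1)) +
          ∑ j ∈ range (n + 2), g j * (n.choose j : ℝ) * p ^ j * (1 - p) ^ (n + 1 - j) := by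
        rw [sum_congr rfl hpascal, sum_add_distrib, sum_range_succ' _ (n + 1),
          binomialExpectation, mul_sum]
        simp only [Nat.choose_zero_right, Nat.cast_one, mul_one, pow_zero, Nat.sub_zero]
        ring
    _ = binomialExpectation n p (shiftMix p g) := by
        rw [hfailure, binomialExpectation, binomialExpectation, binomialExpectation, mul_sum,
          mul_sum, ← sum_add_distrib]
        refine sum_congr rfl fun z _ => ?_
        rw [shiftMix]
        ring

theorem two_mul_shiftMix_offsetRatio_le {p s : ℝ} (hp0 : 0 ≤ p) (hp1 : p ≤ 1) (hs : 1 ≤ s)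
    (z : ℕ) :
    2 * shiftMix p (offsetRatio s) z ≤
      shiftMix p (shiftMix p (offsetRatio (s - 1))) z + offsetRatio (s + 1) z := by
  have hx : 0 ≤ (z : ℝ) := Nat.cast_nonneg z
  simp only [shiftMix, offsetRatio]
  push_cast
  generalize (z : ℝ) = x at hx ⊢
  rcases (show 0 ≤ x + (s - 1) by linarith).eq_or_lt with hdeg | hpos
  · -- `x = 0`, `s = 1`: the term `0 / 0` is `0` in Lean.
    obtain ⟨rfl, rfl⟩ : x = 0 ∧ s = 1 := by constructor <;> linarith
    norm_num
    nlinarith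
  · have h1 : x + 1 + 1 + (s - 1) ≠ 0 := by linarith
    have h2 : x + 1 + (s - 1) ≠ 0 := by linarith
    have h3 : x + (s + 1) ≠ 0 := by linarith
    have h4 : x + 1 + s ≠ 0 := by linarith
    have h5 : x + s ≠ 0 := by linarith
    have h6 : x + s + 1 ≠ 0 := by linarith
    have hgap :
        p * (p * ((x + 1 + 1) / (x + 1 + 1 + (s - 1))) +
              (1 - p) * ((x + 1) / (x + 1 + (s - 1)))) +
            (1 - p) * (p * ((x + 1) / (x + 1 + (s - 1))) + (1 - p) * (x / (x + (s - 1)))) +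
            x / (x + (s + 1)) -
          2 * (p * ((x + 1) / (x + 1 + s)) + (1 - p) * (x / (x + s))) =
        2 * (1 - p) * (x + (s - 1) * p) / ((x + (s - 1)) * (x + s) * (x + s + 1)) := by
      field_simp
      ring
    rw [← sub_nonneg, hgap]
    have := mul_nonneg (sub_nonneg.2 hs) hp0
    apply div_nonneg
    · nlinarith
    · positivity

theorem stmt_12_general (L : ℕ) (p : ℝ) (hp0 : 0 ≤ p) (hp1 : p ≤ 1)
    (κ : ℕ → ℝ)
    (hκ : ∀ r : ℕ, r ≤ L → κ r = ∑ j ∈ Finset.Icc 1 (L - r),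
      (j : ℝ) / ((j : ℝ) + (r : ℝ)) * ((L - r).choose j : ℝ) *
        p ^ j * (1 - p) ^ (L - r - j))
    (r : ℕ) (hr1 : 1 ≤ r) (hr2 : r ≤ L - 1) :
    2 * κ r ≤ κ (r - 1) + κ (r + 1) := by
  have hκ' (k : ℕ) (hk : k ≤ L) : κ k = binomialExpectation (L - k) p (offsetRatio k) :=
    (hκ k hk).trans (sum_Icc_one_eq_binomialExpectation _ _ _ (by simp))
  set m := L - (r + 1)
  have hnext : κ (r + 1) = binomialExpectation m p (offsetRatio (r + 1)) := by
    rw [hκ' _ (by omega), Nat.cast_succ]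
  have hcur : κ r = binomialExpectation m p (shiftMix p (offsetRatio r)) := by
    rw [hκ' r (by omega), ← binomialExpectation_succ, show L - r = m + 1 by omega]
  have hprev :
      κ (r - 1) = binomialExpectation m p (shiftMix p (shiftMix p (offsetRatio (r - 1)))) := by
    rw [hκ' _ (by omega), ← binomialExpectation_succ, ← binomialExpectation_succ,
      show L - (r - 1) = m + 1 + 1 by omega, Nat.cast_sub hr1, Nat.cast_one]
  rw [hprev, hcur, hnext, ← binomialExpectation_const_mul, ← binomialExpectation_add]
  exact binomialExpectation_mono hp0 hp1
    (two_mul_shiftMix_offsetRatio_le hp0 hp1 (by exact_mod_cast hr1))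

/-- Discrete convexity of the per-file centralized caching rate (inequality
(eq:cvx) in Appendix F, key to Proposition 2): with
`κ(r) = ∑_{j=1}^{L-r} (j/(j+r)) C(L-r,j) p^j (1-p)^{L-r-j}` for `0 ≤ r ≤ L`,
one has `κ(r-1) + κ(r+1) ≥ 2κ(r)` for every `1 ≤ r ≤ L-1`. -/
theorem stmt_12 (L : ℕ) (hL : 2 ≤ L) (p : ℝ) (hp0 : 0 ≤ p) (hp1 : p ≤ 1)
    (κ : ℕ → ℝ)
    (hκ : ∀ r : ℕ, r ≤ L → κ r = ∑ j ∈ Finset.Icc 1 (L - r),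
      (j : ℝ) / ((j : ℝ) + (r : ℝ)) * ((L - r).choose j : ℝ) *
        p ^ j * (1 - p) ^ (L - r - j))
    (r : ℕ) (hr1 : 1 ≤ r) (hr2 : r ≤ L - 1) :
    2 * κ r ≤ κ (r - 1) + κ (r + 1) :=
  stmt_12_general L p hp0 hp1 κ hκ r hr1 hr2
end

section
/- Let L ≥ 1 and N ≥ 1 be integers, let q : {1,…,N} → [0,1] satisfy ∑_{n=1}^N q(n) = 1, and let r : {1,…,N} → {0,1,…,L}. For j ∈ {0,…,L−1} set α_j = ∑_{n : r(n) = j} q(n). Then ∑_{y ∈ {1,…,N}^L} (∏_{ℓ=1}^{L} q(y_ℓ)) · ∑_{∅ ≠ S ⊆ {1,…,L}} (1/binom(L, |S|−1)) · (1 − ∏_{ℓ ∈ S} 𝟙{ r(y_ℓ) ≠ |S| − 1 }) = ∑_{j=0}^{L−1} ((L−j)/(j+1)) · (1 − (1 − α_j)^{j+1}). -/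
/-!
Under the product weight `∏ ℓ, q (y ℓ)` the requests are i.i.d., so a product over `S` of a
function of the requests averages to the `#S`-th power of its one-request average; for the
indicator of `r (y ℓ) ≠ #S - 1` that average is `1 - α (#S - 1)`. Grouping the subsets by
their size `j + 1` then produces the weight `C(L, j+1) / C(L, j) = (L - j) / (j + 1)`.
-/

open Finset

section IIDProducts

variable {ι β R : Type*} [Fintype ι] [DecidableEq ι] [Fintype β]

theorem sum_pi_prod_mul_prod_eq_pow [CommSemiring R] {q : β → R} (hq : ∑ b, q b = 1)
    (g : β → R) (S : Finset ι) :
    ∑ y : ι → β, (∏ i, q (y i)) * ∏ i ∈ S, g (y i) = (∑ b, q b * g b) ^ #S := by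
  have hfactor : ∀ i : ι, ∑ b, q b * (if i ∈ S then g b else 1)
      = if i ∈ S then ∑ b, q b * g b else 1 := by
    intro i
    split_ifs <;> simp [hq]
  calc ∑ y : ι → β, (∏ i, q (y i)) * ∏ i ∈ S, g (y i)
      = ∑ y : ι → β, ∏ i, q (y i) * (if i ∈ S then g (y i) else 1) := by
        simp only [prod_mul_distrib, prod_ite_mem, univ_inter]
    _ = ∏ i, ∑ b, q b * (if i ∈ S then g b else 1) := by
        rw [prod_univ_sum, Fintype.piFinset_univ]
    _ = (∑ b, q b * g b) ^ #S := by
        simp only [hfactor, prod_ite_mem, univ_inter, prod_const]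

theorem sum_pi_prod_eq_one [CommSemiring R] {q : β → R} (hq : ∑ b, q b = 1) :
    ∑ y : ι → β, ∏ i, q (y i) = 1 := by
  simpa using sum_pi_prod_mul_prod_eq_pow hq (fun _ => 1) (∅ : Finset ι)

theorem sum_mul_ite_ne_eq_one_sub {γ : Type*} [DecidableEq γ] [Ring R] {q : β → R}
    (hq : ∑ b, q b = 1) (r : β → γ) (j : γ) :
    ∑ b, q b * (if r b ≠ j then 1 else 0) = 1 - ∑ b, (if r b = j then q b else 0) := by
  rw [← hq, ← sum_sub_distrib]
  refine sum_congr rfl fun b _ => ?_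
  split_ifs <;> simp_all

theorem sum_pi_prod_mul_one_sub_prod_ite_ne {γ : Type*} [DecidableEq γ] [CommRing R]
    {q : β → R} (hq : ∑ b, q b = 1) (r : β → γ) (j : γ) (S : Finset ι) :
    ∑ y : ι → β, (∏ i, q (y i)) * (1 - ∏ i ∈ S, if r (y i) ≠ j then 1 else 0)
      = 1 - (1 - ∑ b, (if r b = j then q b else 0)) ^ #S := by
  have hpow := sum_pi_prod_mul_prod_eq_pow hq (fun b => if r b ≠ j then (1 : R) else 0) S
  rw [sum_mul_ite_ne_eq_one_sub hq] at hpow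
  simp only [mul_sub, mul_one, sum_sub_distrib, sum_pi_prod_eq_one hq, hpow]

end IIDProducts

theorem sum_filter_nonempty_apply_card {ι M : Type*} [Fintype ι] [AddCommMonoid M] (f : ℕ → M) :
    ∑ S ∈ (univ : Finset ι).powerset.filter (fun S => S.Nonempty), f #S
      = ∑ k ∈ range (Fintype.card ι), (Fintype.card ι).choose (k + 1) • f (k + 1) := by
  let g : ℕ → M := fun k => if k = 0 then 0 else f k
  calc ∑ S ∈ (univ : Finset ι).powerset.filter (fun S => S.Nonempty), f #S
      = ∑ S ∈ (univ : Finset ι).powerset, g #S := by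
        rw [sum_filter]
        refine sum_congr rfl fun S _ => ?_
        simp only [g, ← card_pos, pos_iff_ne_zero, ite_not]
    _ = _ := by
        rw [sum_powerset_apply_card, card_univ, sum_range_succ']
        simp [g]

theorem Nat.cast_choose_succ_div_cast_choose {K : Type*} [Field K] [CharZero K] {n k : ℕ}
    (hk : k < n) :
    (n.choose (k + 1) : K) / n.choose k = (n - k) / (k + 1) := by
  have h : (n.choose (k + 1) : K) * (k + 1) = n.choose k * (n - k) := by
    rw [← Nat.cast_sub hk.le]
    exact_mod_cast Nat.choose_succ_right_eq n k
  have h1 : (n.choose k : K) ≠ 0 := Nat.cast_ne_zero.mpr (Nat.choose_pos hk.le).ne'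
  have h2 : (k : K) + 1 ≠ 0 := Nat.cast_add_one_ne_zero k
  rw [div_eq_div_iff h1 h2, h]
  ring

theorem stmt_15_general (L N : ℕ)
    (q : Fin N → ℝ)
    (hqsum : ∑ n, q n = 1)
    (r : Fin N → ℕ) :
    ∑ y : Fin L → Fin N, (∏ ℓ, q (y ℓ)) *
        ∑ S ∈ Finset.univ.powerset.filter (fun S : Finset (Fin L) => S.Nonempty),
          (1 / (L.choose (S.card - 1) : ℝ)) *
            (1 - ∏ ℓ ∈ S, (if r (y ℓ) ≠ S.card - 1 then (1 : ℝ) else 0))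
      = ∑ j ∈ Finset.range L,
          (((L : ℝ) - (j : ℝ)) / ((j : ℝ) + 1)) *
            (1 - (1 - ∑ n, (if r n = j then q n else 0)) ^ (j + 1)) := by
  set α : ℕ → ℝ := fun j => ∑ n, if r n = j then q n else 0
  calc _ = ∑ S ∈ Finset.univ.powerset.filter (fun S : Finset (Fin L) => S.Nonempty),
          (1 / (L.choose (#S - 1) : ℝ)) * (1 - (1 - α (#S - 1)) ^ #S) := by
        simp only [mul_sum, mul_left_comm (∏ ℓ, q _)]
        rw [sum_comm]
        refine sum_congr rfl fun S _ => ?_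
        rw [← mul_sum, sum_pi_prod_mul_one_sub_prod_ite_ne hqsum]
    _ = ∑ j ∈ range L,
          (L.choose (j + 1) : ℝ) * (1 / L.choose j * (1 - (1 - α j) ^ (j + 1))) := by
        rw [sum_filter_nonempty_apply_card
          (fun k => (1 / (L.choose (k - 1) : ℝ)) * (1 - (1 - α (k - 1)) ^ k)), Fintype.card_fin]
        simp only [nsmul_eq_mul, Nat.add_sub_cancel]
    _ = _ := by
        refine sum_congr rfl fun j hj => ?_
        rw [← mul_assoc, mul_one_div, Nat.cast_choose_succ_div_cast_choose (mem_range.mp hj)]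

/-- The average update rate identity for the centralized scheme in the static
request single-block-encoding FSN (second part of Theorem 8, Appendix B):
averaging the per-request update rate
`∑_{∅≠S⊆[L]} (1 - ∏_{ℓ∈S} 𝟙{r(y_ℓ) ≠ |S|-1}) / C(L,|S|-1)` over i.i.d.
requests `y` with popularity `q` gives
`∑_{j=0}^{L-1} ((L-j)/(j+1)) (1 - (1 - α_j)^{j+1})`,
where `α_j = ∑_{n : r n = j} q n`. -/
theorem stmt_15 (L N : ℕ) (hL : 1 ≤ L) (hN : 1 ≤ N)
    (q : Fin N → ℝ) (hq0 : ∀ n, 0 ≤ q n) (hq1 : ∀ n, q n ≤ 1)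
    (hqsum : ∑ n, q n = 1)
    (r : Fin N → ℕ) (hr : ∀ n, r n ≤ L) :
    ∑ y : Fin L → Fin N, (∏ ℓ, q (y ℓ)) *
        ∑ S ∈ Finset.univ.powerset.filter (fun S : Finset (Fin L) => S.Nonempty),
          (1 / (L.choose (S.card - 1) : ℝ)) *
            (1 - ∏ ℓ ∈ S, (if r (y ℓ) ≠ S.card - 1 then (1 : ℝ) else 0))
      = ∑ j ∈ Finset.range L,
          (((L : ℝ) - (j : ℝ)) / ((j : ℝ) + 1)) *
            (1 - (1 - ∑ n, (if r n = j then q n else 0)) ^ (j + 1)) :=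
  stmt_15_general L N q hqsum r
end

section
/- Let L ≥ 2 be an integer, let r be an integer with 2 ≤ r ≤ L, let p ∈ [0,1] be real, and set m = L − r. Then ∑_{v=0}^{m+1} binom(m+1, v) p^{v}(1−p)^{m+1−v} · v/(v+r−1) − ∑_{v=0}^{m} binom(m, v) p^{v}(1−p)^{m−v} · v/(v+r) = p · ∑_{v=0}^{m} binom(m, v) p^{v}(1−p)^{m−v} · 1/(v+r) + (1−p) · ∑_{v=0}^{m} binom(m, v) p^{v}(1−p)^{m−v} · v/((v+r−1)(v+r)). -/
/-!
If `V ∼ Binomial(m, p)` and `B ∼ Bernoulli(p)` are independent, then `V + B ∼ Binomial(m + 1, p)`,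
so Pascal's rule gives `E f(V + B) = E[p f(V + 1) + (1 - p) f(V)]`. With `f v = v / (v + r - 1)`
the identity then holds term by term, because `(v + 1)/(v + r) - v/(v + r) = 1/(v + r)` and
`v/(v + r - 1) - v/(v + r) = v/((v + r - 1)(v + r))`.
-/

open Finset

theorem sum_range_succ_choose_mul_pow_mul_one_sub_pow {R : Type*} [CommRing R]
    (m : ℕ) (p : R) (f : ℕ → R) :
    ∑ v ∈ range (m + 2), ((m + 1).choose v : R) * p ^ v * (1 - p) ^ (m + 1 - v) * f v =
      ∑ v ∈ range (m + 1),
        (m.choose v : R) * p ^ v * (1 - p) ^ (m - v) * (p * f (v + 1) + (1 - p) * f v) := by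
  set g : ℕ → R := fun v => (m.choose v : R) * p ^ v * (1 - p) ^ (m + 1 - v) * f v
  have pascal : ∀ i ∈ range (m + 1),
      ((m + 1).choose (i + 1) : R) * p ^ (i + 1) * (1 - p) ^ (m + 1 - (i + 1)) * f (i + 1) =
        (m.choose i : R) * p ^ i * (1 - p) ^ (m - i) * (p * f (i + 1)) + g (i + 1) := by
    intro i _
    simp only [g, Nat.choose_succ_succ', Nat.cast_add, Nat.add_sub_add_right]
    ring
  have hg₀ : ((m + 1).choose 0 : R) * p ^ 0 * (1 - p) ^ (m + 1 - 0) * f 0 = g 0 := by simp [g]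
  have hg : ∑ v ∈ range (m + 2), g v =
      ∑ v ∈ range (m + 1), (m.choose v : R) * p ^ v * (1 - p) ^ (m - v) * ((1 - p) * f v) := by
    rw [sum_range_succ]
    simp only [g, Nat.choose_succ_self, Nat.cast_zero, zero_mul, add_zero]
    refine sum_congr rfl fun v hv => ?_
    rw [Nat.succ_sub (Nat.lt_succ_iff.mp (mem_range.mp hv)), pow_succ]
    ring
  rw [sum_range_succ', sum_congr rfl pascal, sum_add_distrib, hg₀, add_assoc,
    ← sum_range_succ' g, hg, ← sum_add_distrib]
  exact sum_congr rfl fun v _ => by ring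

theorem stmt_16_general (r : ℕ) (hr2 : 2 ≤ r) (p : ℝ) (m : ℕ) :
    (∑ v ∈ Finset.range (m + 2),
        ((m + 1).choose v : ℝ) * p ^ v * (1 - p) ^ (m + 1 - v) *
          ((v : ℝ) / ((v : ℝ) + (r : ℝ) - 1)))
      - (∑ v ∈ Finset.range (m + 1),
          (m.choose v : ℝ) * p ^ v * (1 - p) ^ (m - v) *
            ((v : ℝ) / ((v : ℝ) + (r : ℝ))))
    = p * (∑ v ∈ Finset.range (m + 1),
          (m.choose v : ℝ) * p ^ v * (1 - p) ^ (m - v) *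
            (1 / ((v : ℝ) + (r : ℝ))))
      + (1 - p) * (∑ v ∈ Finset.range (m + 1),
          (m.choose v : ℝ) * p ^ v * (1 - p) ^ (m - v) *
            ((v : ℝ) / (((v : ℝ) + (r : ℝ) - 1) * ((v : ℝ) + (r : ℝ))))) := by
  rw [sum_range_succ_choose_mul_pow_mul_one_sub_pow m p fun v : ℕ => (v : ℝ) / (v + r - 1),
    mul_sum, mul_sum, ← sum_sub_distrib, ← sum_add_distrib]
  refine sum_congr rfl fun v _ => ?_
  have hr : (2 : ℝ) ≤ r := by exact_mod_cast hr2
  have hv : (0 : ℝ) ≤ v := v.cast_nonneg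
  have h₁ : (v : ℝ) + r - 1 ≠ 0 := by linarith
  have h₂ : (v : ℝ) + r ≠ 0 := by linarith
  have hshift : ((v + 1 : ℕ) : ℝ) + r - 1 = v + r := by push_cast; ring
  rw [hshift, Nat.cast_succ]
  field_simp
  ring

/-- The decomposition of `κ(r-1) - κ(r)` used in the `r ≥ 2` case of the
discrete convexity proof in Appendix F:
`E[(V+B)/(V+B+r-1)] - E[V/(V+r)] = p·E[1/(V+r)] + (1-p)·E[V/((V+r-1)(V+r))]`
for `V ∼ Binomial(m, p)` with `m = L - r` and `B ∼ Bernoulli(p)` independent,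
written out as sums over the binomial distributions. -/
theorem stmt_16 (L r : ℕ) (hL : 2 ≤ L) (hr2 : 2 ≤ r) (hrL : r ≤ L)
    (p : ℝ) (hp0 : 0 ≤ p) (hp1 : p ≤ 1)
    (m : ℕ) (hm : m = L - r) :
    (∑ v ∈ Finset.range (m + 2),
        ((m + 1).choose v : ℝ) * p ^ v * (1 - p) ^ (m + 1 - v) *
          ((v : ℝ) / ((v : ℝ) + (r : ℝ) - 1)))
      - (∑ v ∈ Finset.range (m + 1),
          (m.choose v : ℝ) * p ^ v * (1 - p) ^ (m - v) *
            ((v : ℝ) / ((v : ℝ) + (r : ℝ))))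
    = p * (∑ v ∈ Finset.range (m + 1),
          (m.choose v : ℝ) * p ^ v * (1 - p) ^ (m - v) *
            (1 / ((v : ℝ) + (r : ℝ))))
      + (1 - p) * (∑ v ∈ Finset.range (m + 1),
          (m.choose v : ℝ) * p ^ v * (1 - p) ^ (m - v) *
            ((v : ℝ) / (((v : ℝ) + (r : ℝ) - 1) * ((v : ℝ) + (r : ℝ))))) :=
  stmt_16_general r hr2 p m
end
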